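/- The operators H = Σ_{n≥1}[n²+βn(N−n)](p_n∂_{p_n}+p̃_n∂_{p̃_n}) + β Σ_{m,n≥1}[(m+n)p_m p_n ∂_{p_{m+n}} + 2m p_n p̃_m ∂_{p̃_{n+m}}] + Σ_{m,n≥1} mn[p_{m+n}∂_{p_n}∂_{p_m} + 2p̃_{n+m}∂_{p̃_m}∂_{p_n}] and I = Σ_{n≥0}(1−β) n p̃_n ∂_{p̃_n} + (β/2)Σ_{m,n≥0} p̃_m p̃_n ∂_{p̃_m}∂_{p̃_n} + Σ_{m≥0,n≥1}[n p̃_{m+n} ∂_{p̃_m} ∂_{p_n} + β p_n p̃_m ∂_{p̃_{m+n}}] are self-adjoint with respect to the combinatorial scalar product: ⟨⟨Hf|g⟩⟩_β = ⟨⟨f|Hg⟩⟩_β and ⟨⟨If|g⟩⟩_β = ⟨⟨f|Ig⟩⟩_β for all f, g in P(β). -/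

import Mathlib

/-!
Common framework for "Orthogonality of Jack polynomials in superspace"
(Desrosiers–Lapointe–Mathieu).

We work over the field `F = ℚ(β)` of rational functions in the parameter `β`.
Superpartitions are encoded as a finset `a` of (distinct) fermionic parts
together with a multiset `s` of positive bosonic parts.
-/

noncomputable section

open scoped BigOperators

/-- The base field `ℚ(β)`. -/
abbrev F : Type := RatFunc ℚ

/-- The parameter `β`, the transcendental generator of `ℚ(β)`. -/
def βp : F := RatFunc.X

/-- The generalized binomial coefficient `C(β+k−1, k) = β(β+1)⋯(β+k−1)/k!`. -/
def binomβ (k : ℕ) : F := (∏ j ∈ Finset.range k, (βp + (j : F))) / (k.factorial : F)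

/-- The falling factorial `(a)_k = a(a−1)⋯(a−k+1)`. -/
def fallF (a : F) (k : ℕ) : F := ∏ j ∈ Finset.range k, (a - (j : F))

/-- Evaluation of a rational function in `β` at a rational number
(junk value at poles). -/
def evalQ (q : ℚ) (f : F) : ℚ := RatFunc.eval (RingHom.id ℚ) q f

/-! ### Partition combinatorics on multisets -/

/-- Sort a multiset of naturals in (weakly) decreasing order. -/
def sortD (M : Multiset ℕ) : List ℕ := (M.sort (· ≤ ·)).reverse

/-- `k`-th partial sum `λ₁ + ⋯ + λ_k` of the decreasing rearrangement. -/
def psum (M : Multiset ℕ) (k : ℕ) : ℕ := ((sortD M).take k).sum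

/-- Strip the zero parts. -/
def stripZ (M : Multiset ℕ) : Multiset ℕ := M.filter (fun v => 0 < v)

/-- Dominance order on partitions (of the same integer). -/
def domLE (M N : Multiset ℕ) : Prop := M.sum = N.sum ∧ ∀ k, psum M k ≤ psum N k

/-- Strict dominance order. -/
def domLT (M N : Multiset ℕ) : Prop := domLE M N ∧ stripZ M ≠ stripZ N

/-- The conjugate (transposed) partition: `λ'_j = #{i : λ_i ≥ j}`. -/
def conjM (M : Multiset ℕ) : Multiset ℕ :=
  (↑((List.range ((sortD M).headD 0)).map fun j =>
      Multiset.card (M.filter fun v => j < v)) : Multiset ℕ)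

/-! ### Superpartitions -/

/-- A superpartition `Λ = (Λ₁,…,Λ_m; Λ_{m+1},…,Λ_N)`: the fermionic parts
`Λ₁ > ⋯ > Λ_m ≥ 0` form a finset `a`, and the bosonic parts
`Λ_{m+1} ≥ ⋯ ≥ Λ_N ≥ 0` form a multiset `s` of positive integers
(trailing zero bosonic parts being immaterial). -/
structure SuperPartition where
  a : Finset ℕ
  s : Multiset ℕ
  hs : ∀ n ∈ s, 0 < n

namespace SuperPartition

instance : DecidableEq SuperPartition := Classical.decEq _

/-- The fermionic degree `m`. -/
def fdeg (Λ : SuperPartition) : ℕ := Λ.a.card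

/-- The bosonic degree `n = |Λ|`. -/
def bdeg (Λ : SuperPartition) : ℕ := (∑ k ∈ Λ.a, k) + Λ.s.sum

/-- The length `ℓ(Λ) = m + (number of nonzero parts of Λˢ)`. -/
def ell (Λ : SuperPartition) : ℕ := Λ.a.card + Multiset.card Λ.s

/-- The fermionic parts in decreasing order. -/
def sortedA (Λ : SuperPartition) : List ℕ := (Λ.a.sort (· ≤ ·)).reverse

/-- The bosonic parts in decreasing order. -/
def sortedS (Λ : SuperPartition) : List ℕ := (Λ.s.sort (· ≤ ·)).reverse

/-- All the parts `Λ₁,…,Λ_m,Λ_{m+1},…` in the standard order. -/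
def parts (Λ : SuperPartition) : List ℕ := Λ.sortedA ++ Λ.sortedS

/-- `n_Λ! = n_{Λˢ}(1)! n_{Λˢ}(2)! ⋯`, the product of the factorials of the
multiplicities of the bosonic parts. -/
def nfact (Λ : SuperPartition) : ℕ := ∏ i ∈ Λ.s.toFinset, (Λ.s.count i).factorial

/-- `z_{Λˢ} = ∏ i^{m_i} m_i!`. -/
def zs (Λ : SuperPartition) : ℕ := Λ.s.prod * Λ.nfact

/-- `z_Λ(γ) = γ^{−ℓ(Λ)} z_{Λˢ}` for a parameter `γ`. -/
def zgen (Λ : SuperPartition) (γ : F) : F := γ⁻¹ ^ Λ.ell * (Λ.zs : F)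

/-- `z_Λ(β) = β^{−ℓ(Λ)} z_{Λˢ}`. -/
def zβ (Λ : SuperPartition) : F := Λ.zgen βp

/-- The sign `(−1)^{m(m−1)/2}` (the effect of `↑` on a polynomial of
fermionic degree `m`). -/
def sgn (Λ : SuperPartition) : F := (-1 : F) ^ (Λ.fdeg * (Λ.fdeg - 1) / 2)

/-- `Λ*`: the multiset of all parts of `Λ`. -/
def star (Λ : SuperPartition) : Multiset ℕ := Λ.a.val + Λ.s

/-- The shape (row lengths) of the diagram `D[Λ]` *including* the circles:
each fermionic part contributes a row of length one more. -/
def circ (Λ : SuperPartition) : Multiset ℕ := Λ.a.val.map (· + 1) + Λ.s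

/-- `Λ*` as a decreasing list. -/
def starSorted (Λ : SuperPartition) : List ℕ := sortD Λ.star

end SuperPartition

/-- Bruhat order on superpartitions (of the same bidegree `(n|m)`):
`Ω ≤ Λ` iff `Λ* > Ω*` in dominance, or `Λ* = Ω*` and the circled shape of
`D[Λ]` dominates that of `D[Ω]`. -/
def bruhatLE (Ω Λ : SuperPartition) : Prop :=
  Ω.fdeg = Λ.fdeg ∧ Ω.bdeg = Λ.bdeg ∧
    (domLT Ω.star Λ.star ∨ (Ω.star = Λ.star ∧ domLE Ω.circ Λ.circ))

/-- Strict Bruhat order. -/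
def bruhatLT (Ω Λ : SuperPartition) : Prop := bruhatLE Ω Λ ∧ Ω ≠ Λ

/-- `Λc` is the conjugate `Λ'` of `Λ`: the diagram `D[Λc]` (circles included)
is the transpose of `D[Λ]`; equivalently both the star and the circled shape
get transposed. -/
def IsConjSP (Λ Λc : SuperPartition) : Prop :=
  stripZ Λc.star = conjM Λ.star ∧ Λc.circ = conjM Λ.circ

/-- The empty superpartition. -/
def SuperPartition.empty : SuperPartition :=
  ⟨∅, 0, fun n hn => absurd hn (Multiset.notMem_zero n)⟩

/-- The one-row superpartition `(n)` (a single bosonic part `n`). -/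
def bRow (n : ℕ) : SuperPartition :=
  ⟨∅, Multiset.filter (fun v => 0 < v) {n}, fun k hk => (Multiset.mem_filter.mp hk).2⟩

/-- The one-row superpartition `(k; 0)` (a single fermionic part `k`). -/
def fRow (k : ℕ) : SuperPartition := ⟨{k}, 0, fun n hn => absurd hn (Multiset.notMem_zero n)⟩
/-! ### Infinite sums and products of superfunctions -/

/-- `L` is the value of the infinite (ordered) product `∏_{i≥1} f i`
of a sequence in a (possibly noncommutative) topological ring. -/
def IsProdLimit {A : Type} [Ring A] [TopologicalSpace A] (f : ℕ → A) (L : A) : Prop :=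
  Filter.Tendsto (fun n => ((List.range n).map f).prod) Filter.atTop (nhds L)

section Generic

variable {A : Type} {ι : Type}

/-- The binomial series `(1 − v)^{−β} = ∑_k C(β+k−1,k) v^k`. -/
def invβSeries [Ring A] [Algebra F A] [TopologicalSpace A] (v : A) : A :=
  ∑' k : ℕ, binomβ k • v ^ k

/-- The geometric series `(1 − v)^{−1} = ∑_k v^k`. -/
def geomSeries [Ring A] [TopologicalSpace A] (v : A) : A := ∑' k : ℕ, v ^ k

/-- The bosonic power sum `p_n = ∑_i x_i^n`. -/
def pbGen [Ring A] [TopologicalSpace A] (x : ι → A) (n : ℕ) : A := ∑' i, x i ^ n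

/-- The fermionic power sum `p̃_k = ∑_i θ_i x_i^k`. -/
def pfGen [Ring A] [TopologicalSpace A] (x θ : ι → A) (k : ℕ) : A := ∑' i, θ i * x i ^ k

/-- For a multiplicative family (`gb` in the bosonic rows, `gf` in the
fermionic rows), the product
`f_Λ = f̃_{Λ₁} ⋯ f̃_{Λ_m} f_{Λ_{m+1}} ⋯ f_{Λ_N}`. -/
def prodRows [Ring A] (gb gf : ℕ → A) (Λ : SuperPartition) : A :=
  (Λ.sortedA.map gf).prod * (Λ.sortedS.map gb).prod

/-- The power sum `p_Λ = p̃_{Λ₁} ⋯ p̃_{Λ_m} p_{Λ_{m+1}} ⋯ p_{Λ_N}`. -/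
def pPGen [Ring A] [TopologicalSpace A] (x θ : ι → A) (Λ : SuperPartition) : A :=
  prodRows (pbGen x) (pfGen x θ) Λ

/-- The supermonomial `m_Λ`: the sum of all distinct terms
`θ_{σ(1)} ⋯ θ_{σ(m)} x_{σ(1)}^{Λ₁} ⋯ x_{σ(N)}^{Λ_N}`; realized as
`(n_Λ!)⁻¹` times the sum over all injections of the rows into the variables. -/
def mPGen [Ring A] [Algebra F A] [TopologicalSpace A] (x θ : ι → A)
    (Λ : SuperPartition) : A :=
  ((Λ.nfact : F))⁻¹ •
    ∑' e : Fin Λ.parts.length ↪ ι,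
      ((((List.finRange Λ.parts.length).filter fun (i : Fin Λ.parts.length) => ((i : ℕ) < Λ.fdeg)).map
          fun i => θ (e i)).prod *
        (((List.finRange Λ.parts.length).map fun i => x (e i) ^ Λ.parts.get i).prod))

/-- A pair `(t, τ)` of formal parameters: `t` is even (commutes with
everything) and `τ` is an odd (Grassmannian) parameter, `τ² = 0`, commuting
with the bosonic variables and anticommuting with the fermionic ones. -/
structure OddParam [Ring A] (x θ : ι → A) where
  t : A
  τ : A
  ht : ∀ b : A, t * b = b * t
  hττ : τ * τ = 0
  hτt : τ * t = t * τ
  hτx : ∀ i, τ * x i = x i * τ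
  hτθ : ∀ i, τ * θ i = -(θ i * τ)

/-- `g_n, g̃_n` are given by the generating series
`∏_{i≥1} (1 − t x_i − τ θ_i)^{−β} = ∑_n t^n (g_n + τ g̃_n)`,
for all admissible formal parameter pairs `(t,τ)` (parameters are tested
against the full variable family `(xa, θa)`, the product being over the
family `(xv, θv)`). -/
def GenβBy [Ring A] [Algebra F A] [TopologicalSpace A] (xa θa : ι → A)
    (xv θv : ℕ → A) (g gt : ℕ → A) : Prop :=
  ∀ pp : OddParam xa θa,
    IsProdLimit (fun i => invβSeries (pp.t * xv i + pp.τ * θv i))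
      (∑' n : ℕ, pp.t ^ n * (g n + pp.τ * gt n))

/-- `h_n, h̃_n` are given by the generating series
`∏_{i≥1} (1 − t x_i − τ θ_i)^{−1} = ∑_n t^n (h_n + τ h̃_n)`. -/
def GenGeomBy [Ring A] [TopologicalSpace A] (xa θa : ι → A)
    (xv θv : ℕ → A) (h ht : ℕ → A) : Prop :=
  ∀ pp : OddParam xa θa,
    IsProdLimit (fun i => geomSeries (pp.t * xv i + pp.τ * θv i))
      (∑' n : ℕ, pp.t ^ n * (h n + pp.τ * ht n))

/-- `e_n, ẽ_n` are given by the generating series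
`∏_{i≥1} (1 + t x_i + τ θ_i) = ∑_n t^n (e_n + τ ẽ_n)`. -/
def GenElemBy [Ring A] [TopologicalSpace A] (xa θa : ι → A)
    (xv θv : ℕ → A) (e et : ℕ → A) : Prop :=
  ∀ pp : OddParam xa θa,
    IsProdLimit (fun i => 1 + pp.t * xv i + pp.τ * θv i)
      (∑' n : ℕ, pp.t ^ n * (e n + pp.τ * et n))

/-- In `N` variables: `g_n, g̃_n` given by the (finite) generating product
`∏_{i=1}^N (1 − t x_i − τ θ_i)^{−β} = ∑_n t^n (g_n + τ g̃_n)`. -/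
def GenβFin [Ring A] [Algebra F A] [TopologicalSpace A] {N : ℕ}
    (xa θa : Fin N → A) (g gt : ℕ → A) : Prop :=
  ∀ pp : OddParam xa θa,
    (((List.finRange N).map fun i => invβSeries (pp.t * xa i + pp.τ * θa i)).prod
      = ∑' n : ℕ, pp.t ^ n * (g n + pp.τ * gt n))

end Generic

/-! ### Variables in superspace -/

/-- An (abstract, completed) ring of functions in superspace containing
infinitely many commuting variables `x_i` and anticommuting variables `θ_i`. -/
structure SuperVars (A : Type) [Ring A] where
  x : ℕ → A
  θ : ℕ → A
  hxx : ∀ i j, x i * x j = x j * x i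
  hxθ : ∀ i j, x i * θ j = θ j * x i
  hθθ : ∀ i j, θ i * θ j = -(θ j * θ i)

/-- Two sets of variables in superspace `(x, θ)` and `(y, φ)` inside one
ambient ring; all bosonic variables commute with everything, and all
fermionic variables mutually anticommute. -/
structure SuperVars2 (A : Type) [Ring A] where
  x : ℕ → A
  y : ℕ → A
  θ : ℕ → A
  φ : ℕ → A
  hxx : ∀ i j, x i * x j = x j * x i
  hyy : ∀ i j, y i * y j = y j * y i
  hxy : ∀ i j, x i * y j = y j * x i
  hxθ : ∀ i j, x i * θ j = θ j * x i
  hxφ : ∀ i j, x i * φ j = φ j * x i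
  hyθ : ∀ i j, y i * θ j = θ j * y i
  hyφ : ∀ i j, y i * φ j = φ j * y i
  hθθ : ∀ i j, θ i * θ j = -(θ j * θ i)
  hθφ : ∀ i j, θ i * φ j = -(φ j * θ i)
  hφφ : ∀ i j, φ i * φ j = -(φ j * φ i)
/-! ### The free module on power sums, and the operators H, I -/

/-- `P(β)` presented through its power-sum coordinates: the free `F`-module
with basis `{p_Λ}` indexed by superpartitions. -/
abbrev PS : Type := SuperPartition →₀ F

/-- The basis vector `p_Λ`. -/
def pUnit (Λ : SuperPartition) : PS := Finsupp.single Λ 1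

/-- Lift of a map defined on the basis `{p_Λ}` to a linear endomorphism. -/
def liftP (g : SuperPartition → PS) : PS →ₗ[F] PS :=
  Finsupp.linearCombination F g

namespace SuperPartition

/-- Adjoin a bosonic part `n ≥ 1`. -/
def addB (n : ℕ) (Λ : SuperPartition) : SuperPartition :=
  if h : 0 < n then
    ⟨Λ.a, n ::ₘ Λ.s, fun k hk => by
      rcases Multiset.mem_cons.mp hk with h' | h'
      · exact h' ▸ h
      · exact Λ.hs k h'⟩
  else Λ

/-- Remove one bosonic part `n`. -/
def eraseB (n : ℕ) (Λ : SuperPartition) : SuperPartition :=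
  ⟨Λ.a, Λ.s.erase n, fun k hk => Λ.hs k (Multiset.mem_of_mem_erase hk)⟩

/-- Adjoin a fermionic part `k`. -/
def addF (k : ℕ) (Λ : SuperPartition) : SuperPartition := ⟨insert k Λ.a, Λ.s, Λ.hs⟩

/-- Remove the fermionic part `k`. -/
def eraseF (k : ℕ) (Λ : SuperPartition) : SuperPartition := ⟨Λ.a.erase k, Λ.s, Λ.hs⟩

/-- The sign `(−1)^{#{j ∈ Λᵃ : j > k}}` produced when the odd generator
`p̃_k` is moved to its position in `p_Λ`. -/
def fsgn (k : ℕ) (Λ : SuperPartition) : F := (-1 : F) ^ (Λ.a.filter (fun j => k < j)).card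

end SuperPartition

open SuperPartition in
/-- Multiplication by the bosonic power sum `p_n`. -/
def opP (n : ℕ) : PS →ₗ[F] PS := liftP fun Λ => pUnit (addB n Λ)

open SuperPartition in
/-- The derivation `∂/∂p_n`. -/
def opDP (n : ℕ) : PS →ₗ[F] PS :=
  liftP fun Λ => (Λ.s.count n : F) • pUnit (eraseB n Λ)

open SuperPartition in
/-- (Left) multiplication by the fermionic power sum `p̃_k`. -/
def opPt (k : ℕ) : PS →ₗ[F] PS :=
  liftP fun Λ => if k ∈ Λ.a then 0 else fsgn k Λ • pUnit (addF k Λ)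

open SuperPartition in
/-- The odd derivation `∂/∂p̃_k`. -/
def opDPt (k : ℕ) : PS →ₗ[F] PS :=
  liftP fun Λ => if k ∈ Λ.a then fsgn k Λ • pUnit (eraseF k Λ) else 0

/-- The operator
`H = ∑_{n≥1} [n² + βn(N−n)] (p_n ∂_{p_n} + p̃_n ∂_{p̃_n})
 + β ∑_{m,n≥1} [(m+n) p_m p_n ∂_{p_{m+n}} + 2m p_n p̃_m ∂_{p̃_{n+m}}]
 + ∑_{m,n≥1} mn [p_{m+n} ∂_{p_n} ∂_{p_m} + 2 p̃_{n+m} ∂_{p̃_m} ∂_{p_n}]`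
(each sum is finite on any fixed `p_Λ`; it is truncated at the bosonic
degree of `Λ`, beyond which all terms vanish). -/
def Hop9 (Ncst : F) : PS →ₗ[F] PS := liftP fun Λ =>
  (∑ n ∈ Finset.Icc 1 Λ.bdeg,
      ((n : F) ^ 2 + βp * (n : F) * (Ncst - (n : F))) •
        (opP n (opDP n (pUnit Λ)) + opPt n (opDPt n (pUnit Λ))))
  + βp • (∑ m ∈ Finset.Icc 1 Λ.bdeg, ∑ n ∈ Finset.Icc 1 Λ.bdeg,
      (((m + n : ℕ) : F) • opP m (opP n (opDP (m + n) (pUnit Λ)))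
        + (2 * (m : F)) • opP n (opPt m (opDPt (n + m) (pUnit Λ)))))
  + (∑ m ∈ Finset.Icc 1 Λ.bdeg, ∑ n ∈ Finset.Icc 1 Λ.bdeg,
      ((m : F) * (n : F)) •
        (opP (m + n) (opDP n (opDP m (pUnit Λ)))
          + (2 : F) • opPt (n + m) (opDPt m (opDP n (pUnit Λ)))))

/-- The operator
`I = ∑_{n≥0} (1−β) n p̃_n ∂_{p̃_n} + (β/2) ∑_{m,n≥0} p̃_m p̃_n ∂_{p̃_m} ∂_{p̃_n}
 + ∑_{m≥0,n≥1} [n p̃_{m+n} ∂_{p̃_m} ∂_{p_n} + β p_n p̃_m ∂_{p̃_{m+n}}]`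
(truncated at the bosonic degree, beyond which all terms vanish). -/
def Iop9 : PS →ₗ[F] PS := liftP fun Λ =>
  (∑ n ∈ Finset.range (Λ.bdeg + 1), ((1 - βp) * (n : F)) • opPt n (opDPt n (pUnit Λ)))
  + (βp / 2) • (∑ m ∈ Finset.range (Λ.bdeg + 1), ∑ n ∈ Finset.range (Λ.bdeg + 1),
      opPt m (opPt n (opDPt m (opDPt n (pUnit Λ)))))
  + (∑ m ∈ Finset.range (Λ.bdeg + 1), ∑ n ∈ Finset.Icc 1 Λ.bdeg,
      ((n : F) • opPt (m + n) (opDPt m (opDP n (pUnit Λ)))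
        + βp • opP n (opPt m (opDPt (m + n) (pUnit Λ)))))

/-- The combinatorial scalar product `⟨⟨·|·⟩⟩_β` in power-sum coordinates:
`⟨⟨p_Λ | p_Ω⟩⟩_β = (−1)^{m(m−1)/2} z_Λ(β) δ_{Λ,Ω}`. -/
def spF (f g : PS) : F := f.sum fun Λ c => c * g Λ * (Λ.sgn * Λ.zβ)

/-! ### Abstract model of the ring of symmetric superfunctions -/

section Abstract

variable {P : Type} [AddCommGroup P] [Module F P]

/-- The combinatorial scalar product with parameter `γ` on a module with a
distinguished power-sum basis `pB`:
`⟨⟨p_Λ | p_Ω⟩⟩ = (−1)^{m(m−1)/2} z_Λ(γ) δ_{Λ,Ω}`. -/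
def spGen (pB : Module.Basis SuperPartition F P) (γ : F) (f g : P) : F :=
  (pB.repr f).sum fun Λ c => c * (pB.repr g) Λ * (Λ.sgn * Λ.zgen γ)

/-- `J` is monic and (strictly) upper triangular in the basis `mB` with
respect to the Bruhat order: `J_Λ = m_Λ + ∑_{Ω < Λ} c_{ΛΩ} m_Ω`. -/
def IsMonicTriangular (mB : Module.Basis SuperPartition F P) (J : SuperPartition → P) : Prop :=
  ∀ Λ, (mB.repr (J Λ)) Λ = 1 ∧ ∀ Ω, (mB.repr (J Λ)) Ω ≠ 0 → Ω = Λ ∨ bruhatLT Ω Λ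

/-- The operator `H` transported to the abstract model via the power-sum
basis. -/
def HopB (pB : Module.Basis SuperPartition F P) (Ncst : F) : P →ₗ[F] P :=
  (pB.repr.symm.toLinearMap.comp (Hop9 Ncst)).comp pB.repr.toLinearMap

/-- The operator `I` transported to the abstract model via the power-sum
basis. -/
def IopB (pB : Module.Basis SuperPartition F P) : P →ₗ[F] P :=
  (pB.repr.symm.toLinearMap.comp Iop9).comp pB.repr.toLinearMap

end Abstract

/-! ### Eigenvalues of the Calogero–Moser–Sutherland operators -/

/-- `ε_Λ(γ) = ∑_{j=1}^N [(Λ*_j)² + γ(N+1−2j) Λ*_j]`. -/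
def epsVal (N : ℕ) (Λ : SuperPartition) (γ : F) : F :=
  ∑ j ∈ Finset.range N,
    (((Λ.starSorted.getD j 0 : ℕ) : F) ^ 2
      + γ * (((N : F) + 1) - 2 * ((j : F) + 1)) * ((Λ.starSorted.getD j 0 : ℕ) : F))

/-- `ε̃_Λ(γ) = |Λᵃ| − γ |(Λ')ᵃ| − γ m(m−1)/2`, where `Λc = Λ'`. -/
def epsTVal (Λ Λc : SuperPartition) (γ : F) : F :=
  ((∑ k ∈ Λ.a, k : ℕ) : F) - γ * ((∑ k ∈ Λc.a, k : ℕ) : F)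
    - γ * ((Λ.fdeg * (Λ.fdeg - 1) / 2 : ℕ) : F)
/-! ### Dunkl–Cherednik operators in `N` variables -/

/-- A system of `N` superspace variables `(x, θ)` inside an ambient
(completed) ring `A`, together with the operator data entering the
Dunkl–Cherednik operators: the partial derivatives `∂_{x_j}`, the exchange
operators `K_{jk}` (acting on the `x`'s only), the divided-difference pieces
`O_{jk} = (x_{max(j,k) or j}/(x_j − x_k))(1 − K_{jk})`, the simultaneous
exchange operators `𝒦_σ` (acting on `x`'s and `θ`'s), and the projection
`θ₁ ∂_{θ₁}`.  The set `extra` consists of the remaining generators of the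
ambient ring (e.g. a second set of variables), which all these operators
leave untouched. -/
structure DunklSystem (N : ℕ) (A : Type) [Ring A] [Algebra F A]
    [TopologicalSpace A] [IsTopologicalRing A] where
  hN : 0 < N
  x : Fin N → A
  θ : Fin N → A
  extra : Set A
  hxx : ∀ i j, x i * x j = x j * x i
  hxθ : ∀ i j, x i * θ j = θ j * x i
  hθθ : ∀ i j, θ i * θ j = -(θ j * θ i)
  -- the partial derivatives ∂_{x_j}
  pdx : Fin N → Module.End F A
  hpdx_mul : ∀ j f g, pdx j (f * g) = pdx j f * g + f * pdx j g
  hpdx_x : ∀ j k, pdx j (x k) = if j = k then 1 else 0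
  hpdx_θ : ∀ j k, pdx j (θ k) = 0
  hpdx_extra : ∀ j b, b ∈ extra → pdx j b = 0
  hpdx_cont : ∀ j, Continuous (pdx j)
  -- the exchange operators K_{jk} (on the x's only)
  Kx : Fin N → Fin N → (A →ₐ[F] A)
  hKx_x : ∀ j k i, Kx j k (x i) = x (Equiv.swap j k i)
  hKx_θ : ∀ j k i, Kx j k (θ i) = θ i
  hKx_extra : ∀ j k b, b ∈ extra → Kx j k b = b
  hKx_cont : ∀ j k, Continuous (Kx j k)
  -- O_{jk}, characterized by (x_j − x_k) O_{jk} f = x_j (1−K_{jk}) f (k<j),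
  --                          (x_j − x_k) O_{jk} f = x_k (1−K_{jk}) f (k>j)
  O : Fin N → Fin N → Module.End F A
  hO_lt : ∀ (j k : Fin N) (f : A), (k : ℕ) < (j : ℕ) → (x j - x k) * O j k f = x j * (f - Kx j k f)
  hO_gt : ∀ (j k : Fin N) (f : A), (j : ℕ) < (k : ℕ) → (x j - x k) * O j k f = x k * (f - Kx j k f)
  hO_cont : ∀ j k, Continuous (O j k)
  -- the simultaneous exchange operators 𝒦_σ
  Ks : Equiv.Perm (Fin N) → (A →ₐ[F] A)
  hKs_x : ∀ σ i, Ks σ (x i) = x (σ i)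
  hKs_θ : ∀ σ i, Ks σ (θ i) = θ (σ i)
  hKs_extra : ∀ σ b, b ∈ extra → Ks σ b = b
  hKs_cont : ∀ σ, Continuous (Ks σ)
  -- the projection θ₁∂_{θ₁}: it kills everything generated without θ₁ and
  -- fixes θ₁ · (anything generated without θ₁)
  T1 : Module.End F A
  hT1_zero : ∀ u, u ∈ (Algebra.adjoin F
      (Set.range x ∪ (θ '' {i | i ≠ ⟨0, hN⟩}) ∪ extra)).topologicalClosure → T1 u = 0
  hT1_one : ∀ u, u ∈ (Algebra.adjoin F
      (Set.range x ∪ (θ '' {i | i ≠ ⟨0, hN⟩}) ∪ extra)).topologicalClosure →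
      T1 (θ ⟨0, hN⟩ * u) = θ ⟨0, hN⟩ * u
  hT1_cont : Continuous T1

namespace DunklSystem

variable {N : ℕ} {A : Type} [Ring A] [Algebra F A] [TopologicalSpace A]
  [IsTopologicalRing A] (S : DunklSystem N A)

/-- The Dunkl–Cherednik operator
`D_j = x_j ∂_{x_j} + γ ∑_{k<j} O_{jk} + γ ∑_{k>j} O_{jk} − γ(j−1)`. -/
def D (γ : F) (j : Fin N) : Module.End F A :=
  (LinearMap.mulLeft F (S.x j)).comp (S.pdx j)
    + γ • (∑ k ∈ Finset.univ.erase j, S.O j k)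
    - (γ * ((j : ℕ) : F)) • (LinearMap.id : A →ₗ[F] A)

/-- `H_r = ∑_{j=1}^N D_j^r`. -/
def Hr (γ : F) (r : ℕ) : Module.End F A := ∑ j : Fin N, (S.D γ j) ^ r

/-- `I_s = (1/(N−1)!) ∑_{σ ∈ S_N} 𝒦_σ (θ₁ ∂_{θ₁} D₁^s) 𝒦_σ⁻¹`. -/
def Is (γ : F) (s : ℕ) : Module.End F A :=
  (((N - 1).factorial : ℕ) : F)⁻¹ •
    ∑ σ : Equiv.Perm (Fin N),
      ((S.Ks σ).toLinearMap.comp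
        ((S.T1 * (S.D γ ⟨0, S.hN⟩) ^ s : Module.End F A).comp
          (S.Ks σ⁻¹).toLinearMap))

/-- `H = H₂ + γ(N−1) H₁ − γ N (1−3N−2N²)/6`. -/
def Hstd (γ : F) : Module.End F A :=
  S.Hr γ 2 + (γ * ((N : F) - 1)) • S.Hr γ 1
    - (γ * (N : F) * (1 - 3 * (N : F) - 2 * (N : F) ^ 2) / 6) • (1 : Module.End F A)

/-- `I = I₁`. -/
def Istd (γ : F) : Module.End F A := S.Is γ 1

end DunklSystem

/-!
Write `w Λ = (−1)^{m(m−1)/2} z_Λ(β)`, so that `⟨⟨·|·⟩⟩_β` is the symmetric form that is diagonal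
in the power sums, `⟨⟨p_Λ|p_Ω⟩⟩_β = δ_{ΛΩ} w Λ`. Adjoining a bosonic part `n` multiplies the weight
by `n (m_n(Λ) + 1)/β`, and adjoining a fermionic part multiplies it by `(−1)^m/β`; hence the
generators have the adjoints `p_n† = (n/β) ∂_{p_n}` and `p̃_k† = −β⁻¹ ∂_{p̃_k} ε`, where `ε` is the
parity operator `ε p_Λ = (−1)^m p_Λ`, which anticommutes with the odd generators. Every term of `H`
and `I` is a word in these operators whose adjoint is again a term: the diagonal terms are
self-adjoint, the `β`-terms of `H` that split a part are adjoint to the terms that join two parts,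
the two halves of the mixed term of `I` are adjoint to each other, and the adjoint of
`p̃_m p̃_n ∂_{p̃_m} ∂_{p̃_n}` is the same word with `m` and `n` exchanged. On `p_Λ` the sums defining
`H` and `I` may be cut off at any bound above the degree of `Λ`, so there both operators agree
with genuine finite sums of such words.
-/

open SuperPartition LinearMap

section AdjointPair

variable {R M : Type*} [CommRing R] [AddCommGroup M] [Module R M] {B : LinearMap.BilinForm R M}

lemma LinearMap.isAdjointPair_sum {ι : Type*} (s : Finset ι) {f g : ι → Module.End R M}
    (h : ∀ i ∈ s, IsAdjointPair B B (f i) (g i)) :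
    IsAdjointPair B B (⇑(∑ i ∈ s, f i)) (⇑(∑ i ∈ s, g i)) := fun x y => by
  simp only [LinearMap.sum_apply, map_sum]
  exact Finset.sum_congr rfl fun i hi => h i hi x y

lemma LinearMap.IsAdjointPair.swap (hB : B.IsSymm) {f g : M → M}
    (h : IsAdjointPair B B f g) : IsAdjointPair B B g f := fun x y => by
  rw [hB.eq, ← h, hB.eq]

lemma LinearMap.IsAdjointPair.isSelfAdjoint_add (hB : B.IsSymm) {f g : Module.End R M}
    (h : IsAdjointPair B B f g) : B.IsSelfAdjoint (f + g) := by
  have := h.add (h.swap hB)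
  rwa [add_comm (⇑g)] at this

end AdjointPair

lemma Finset.sum_sum_subset {ι κ β : Type*} [AddCommMonoid β] {s s' : Finset ι} {t t' : Finset κ}
    (hs : s ⊆ s') (ht : t ⊆ t') {f : ι → κ → β}
    (hf : ∀ i ∈ s', ∀ j ∈ t', (i ∉ s ∨ j ∉ t) → f i j = 0) :
    ∑ i ∈ s, ∑ j ∈ t, f i j = ∑ i ∈ s', ∑ j ∈ t', f i j := by
  rw [← Finset.sum_product', ← Finset.sum_product']
  refine Finset.sum_subset (Finset.product_subset_product hs ht) fun x hx hx' => ?_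
  rw [Finset.mem_product] at hx hx'
  exact hf x.1 hx.1 x.2 hx.2 (not_and_or.1 hx')

lemma βp_ne_zero : βp ≠ 0 := RatFunc.X_ne_zero

namespace SuperPartition

lemma ext {Λ Ω : SuperPartition} (ha : Λ.a = Ω.a) (hs : Λ.s = Ω.s) : Λ = Ω := by
  cases Λ
  cases Ω
  simp_all

def weight (Λ : SuperPartition) : F := Λ.sgn * Λ.zβ

variable {n k : ℕ} {Λ Ω : SuperPartition}

lemma addB_a (n : ℕ) (Λ : SuperPartition) : (addB n Λ).a = Λ.a := by
  unfold addB
  split <;> rfl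

lemma addB_s (hn : 0 < n) (Λ : SuperPartition) : (addB n Λ).s = n ::ₘ Λ.s := by
  rw [addB, dif_pos hn]

lemma eraseB_addB (hn : 0 < n) (Λ : SuperPartition) : eraseB n (addB n Λ) = Λ :=
  ext (addB_a n Λ) (by simp [eraseB, addB_s hn])

lemma addB_eraseB (h : n ∈ Ω.s) : addB n (eraseB n Ω) = Ω :=
  ext (addB_a n _) (by rw [addB_s (Ω.hs n h)]; exact Multiset.cons_erase h)

lemma eraseF_addF (hk : k ∉ Λ.a) : eraseF k (addF k Λ) = Λ :=
  ext (Finset.erase_insert hk) rfl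

lemma addF_eraseF (hk : k ∈ Ω.a) : addF k (eraseF k Ω) = Ω :=
  ext (Finset.insert_erase hk) rfl

lemma fdeg_addB (n : ℕ) (Λ : SuperPartition) : (addB n Λ).fdeg = Λ.fdeg := by
  rw [fdeg, addB_a, fdeg]

lemma fdeg_addF (hk : k ∉ Λ.a) : (addF k Λ).fdeg = Λ.fdeg + 1 :=
  Finset.card_insert_of_notMem hk

lemma fdeg_eraseF (hk : k ∈ Λ.a) : (eraseF k Λ).fdeg = Λ.fdeg - 1 :=
  Finset.card_erase_of_mem hk

lemma fsgn_addF (k : ℕ) (Λ : SuperPartition) : fsgn k (addF k Λ) = fsgn k Λ := by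
  rw [fsgn, addF, Finset.filter_insert, if_neg (lt_irrefl k), fsgn]

lemma nfact_addB (hn : 0 < n) (Λ : SuperPartition) :
    (addB n Λ).nfact = (Λ.s.count n + 1) * Λ.nfact := by
  have hn_mem : n ∈ insert n Λ.s.toFinset := Finset.mem_insert_self n _
  rw [nfact, nfact, addB_s hn, Multiset.toFinset_cons,
    Finset.prod_subset (f := fun i => (Λ.s.count i).factorial)
      (Finset.subset_insert n Λ.s.toFinset) fun i _ hi => by
        rw [Multiset.count_eq_zero.2 (by simpa using hi), Nat.factorial_zero],
    ← Finset.mul_prod_erase _ _ hn_mem,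
    ← Finset.mul_prod_erase _ (fun i => (Λ.s.count i).factorial) hn_mem,
    Multiset.count_cons_self, Nat.factorial_succ, mul_assoc]
  congr 2
  exact Finset.prod_congr rfl fun i hi => by
    rw [Multiset.count_cons_of_ne (Finset.ne_of_mem_erase hi)]

lemma weight_addB (hn : 0 < n) (Λ : SuperPartition) :
    (addB n Λ).weight = βp⁻¹ * n * (Λ.s.count n + 1) * Λ.weight := by
  have hell : (addB n Λ).ell = Λ.ell + 1 := by
    rw [ell, ell, addB_a, addB_s hn, Multiset.card_cons, add_assoc]
  rw [weight, weight, zβ, zβ, zgen, zgen, sgn, sgn, fdeg_addB, hell, zs, zs, addB_s hn,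
    Multiset.prod_cons, nfact_addB hn]
  push_cast
  ring

lemma weight_addF (hk : k ∉ Λ.a) :
    (addF k Λ).weight = (-1) ^ Λ.fdeg * βp⁻¹ * Λ.weight := by
  have hell : (addF k Λ).ell = Λ.ell + 1 := by
    rw [ell, ell, addF, Finset.card_insert_of_notMem hk]
    ring
  rw [weight, weight, zβ, zβ, zgen, zgen, sgn, sgn, fdeg_addF hk, Nat.triangle_succ, hell]
  simp only [zs, nfact, addF, pow_add, pow_succ]
  ring

lemma bdeg_eraseB_le (n : ℕ) (Λ : SuperPartition) : (eraseB n Λ).bdeg ≤ Λ.bdeg := by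
  refine Nat.add_le_add_left (show (Λ.s.erase n).sum ≤ Λ.s.sum from ?_) _
  by_cases h : n ∈ Λ.s
  · exact (Multiset.sum_erase h).symm ▸ Nat.le_add_left _ _
  · rw [Multiset.erase_of_notMem h]

lemma bdeg_eraseF_le (k : ℕ) (Λ : SuperPartition) : (eraseF k Λ).bdeg ≤ Λ.bdeg :=
  Nat.add_le_add_right (Finset.sum_le_sum_of_subset (Finset.erase_subset k Λ.a)) _

lemma count_s_eq_zero_of_bdeg_lt (h : Λ.bdeg < n) : Λ.s.count n = 0 :=
  Multiset.count_eq_zero.2 fun hn => by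
    have := Multiset.le_sum_of_mem hn
    unfold bdeg at h
    omega

lemma notMem_a_of_bdeg_lt (h : Λ.bdeg < k) : k ∉ Λ.a := fun hk => by
  have := Finset.single_le_sum (f := fun i => i) (fun i _ => Nat.zero_le i) hk
  unfold bdeg at h
  omega

end SuperPartition

section PowerSums

lemma liftP_pUnit (g : SuperPartition → PS) (Λ : SuperPartition) : liftP g (pUnit Λ) = g Λ := by
  simp [liftP, pUnit]

lemma pUnit_apply (Λ Ω : SuperPartition) : pUnit Λ Ω = if Λ = Ω then 1 else 0 :=
  Finsupp.single_apply

lemma ext_pUnit {T T' : Module.End F PS} (h : ∀ Λ, T (pUnit Λ) = T' (pUnit Λ)) : T = T' :=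
  Finsupp.basisSingleOne.ext h

lemma opP_pUnit (n : ℕ) (Λ : SuperPartition) : opP n (pUnit Λ) = pUnit (addB n Λ) :=
  liftP_pUnit _ _

lemma opDP_pUnit (n : ℕ) (Λ : SuperPartition) :
    opDP n (pUnit Λ) = (Λ.s.count n : F) • pUnit (eraseB n Λ) :=
  liftP_pUnit _ _

lemma opPt_pUnit (k : ℕ) (Λ : SuperPartition) :
    opPt k (pUnit Λ) = if k ∈ Λ.a then 0 else fsgn k Λ • pUnit (addF k Λ) :=
  liftP_pUnit _ _

lemma opDPt_pUnit (k : ℕ) (Λ : SuperPartition) :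
    opDPt k (pUnit Λ) = if k ∈ Λ.a then fsgn k Λ • pUnit (eraseF k Λ) else 0 :=
  liftP_pUnit _ _

def parity : Module.End F PS := liftP fun Λ => ((-1 : F) ^ Λ.fdeg) • pUnit Λ

lemma parity_pUnit (Λ : SuperPartition) : parity (pUnit Λ) = ((-1 : F) ^ Λ.fdeg) • pUnit Λ :=
  liftP_pUnit _ _

lemma parity_parity (f : PS) : parity (parity f) = f := by
  refine LinearMap.congr_fun (ext_pUnit (T := parity ∘ₗ parity) (T' := LinearMap.id) fun Λ => ?_) f
  rw [LinearMap.comp_apply, parity_pUnit, map_smul, parity_pUnit, smul_smul, ← pow_add,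
    Even.neg_one_pow ⟨_, rfl⟩, one_smul, LinearMap.id_apply]

lemma parity_opPt (k : ℕ) (f : PS) : parity (opPt k f) = -opPt k (parity f) := by
  refine LinearMap.congr_fun
    (ext_pUnit (T := parity ∘ₗ opPt k) (T' := -(opPt k ∘ₗ parity)) fun Λ => ?_) f
  rw [LinearMap.comp_apply, LinearMap.neg_apply, LinearMap.comp_apply, opPt_pUnit,
    parity_pUnit, map_smul, opPt_pUnit]
  split_ifs with hk
  · simp
  · rw [map_smul, parity_pUnit, fdeg_addF hk, smul_smul, smul_smul, ← neg_smul, pow_succ]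
    ring_nf

lemma parity_opDPt (k : ℕ) (f : PS) : parity (opDPt k f) = -opDPt k (parity f) := by
  refine LinearMap.congr_fun
    (ext_pUnit (T := parity ∘ₗ opDPt k) (T' := -(opDPt k ∘ₗ parity)) fun Λ => ?_) f
  rw [LinearMap.comp_apply, LinearMap.neg_apply, LinearMap.comp_apply, opDPt_pUnit,
    parity_pUnit, map_smul, opDPt_pUnit]
  split_ifs with hk
  · rw [map_smul, parity_pUnit, fdeg_eraseF hk, smul_smul, smul_smul, ← neg_smul]
    obtain ⟨m, hm⟩ : ∃ m, Λ.fdeg = m + 1 :=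
      Nat.exists_eq_add_one_of_ne_zero (Finset.card_ne_zero_of_mem hk)
    rw [hm, Nat.add_sub_cancel, pow_succ]
    ring_nf
  · simp

end PowerSums

section ScalarProduct

lemma spF_add_left (f f' g : PS) : spF (f + f') g = spF f g + spF f' g :=
  Finsupp.sum_add_index' (fun _ => by simp) fun _ _ _ => by ring

lemma spF_smul_left (c : F) (f g : PS) : spF (c • f) g = c • spF f g := by
  rw [spF, spF, Finsupp.sum_smul_index' (fun _ => by simp), smul_eq_mul, Finsupp.mul_sum]
  exact Finsupp.sum_congr fun _ _ => by ring

lemma spF_eq_sum {f : PS} {s : Finset SuperPartition} (hf : f.support ⊆ s) (g : PS) :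
    spF f g = ∑ Λ ∈ s, f Λ * g Λ * Λ.weight :=
  Finsupp.sum_of_support_subset f hf _ fun _ _ => by simp

lemma spF_comm (f g : PS) : spF f g = spF g f := by
  rw [spF_eq_sum Finset.subset_union_left g,
    spF_eq_sum (Finset.subset_union_right (s₁ := f.support)) f]
  exact Finset.sum_congr rfl fun _ _ => by ring

def spForm : LinearMap.BilinForm F PS :=
  LinearMap.mk₂ F spF spF_add_left spF_smul_left
    (fun f g g' => by rw [spF_comm, spF_add_left, spF_comm g, spF_comm g'])
    (fun c f g => by rw [spF_comm, spF_smul_left, spF_comm g])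

lemma spForm_apply (f g : PS) : spForm f g = spF f g := rfl

lemma spForm_comm (f g : PS) : spForm f g = spForm g f := spF_comm f g

lemma spForm_isSymm : spForm.IsSymm := ⟨spF_comm⟩

end ScalarProduct

section Adjoints

variable {n : ℕ}

lemma spForm_pUnit_left (Λ : SuperPartition) (g : PS) : spForm (pUnit Λ) g = g Λ * Λ.weight := by
  rw [spForm_apply, spF, pUnit, Finsupp.sum_single_index (by simp), one_mul]
  rfl

lemma isAdjointPair_of_pUnit {T T' : Module.End F PS}
    (h : ∀ Λ Ω, spForm (T (pUnit Λ)) (pUnit Ω) = spForm (pUnit Λ) (T' (pUnit Ω))) :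
    IsAdjointPair spForm spForm T T' := by
  rw [isAdjointPair_iff_comp_eq_compl₂]
  exact LinearMap.ext_basis Finsupp.basisSingleOne Finsupp.basisSingleOne fun Λ Ω => h Λ Ω

lemma isSelfAdjoint_parity : spForm.IsSelfAdjoint parity :=
  isAdjointPair_of_pUnit fun Λ Ω => by
    simp only [parity_pUnit, map_smul, LinearMap.smul_apply, spForm_pUnit_left, pUnit_apply,
      smul_eq_mul]
    by_cases h : Λ = Ω
    · subst h
      rfl
    · simp [Ne.symm h]

lemma isAdjointPair_opP (hn : 0 < n) :
    IsAdjointPair spForm spForm (opP n) (((n : F) / βp) • opDP n : Module.End F PS) :=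
  isAdjointPair_of_pUnit fun Λ Ω => by
    simp only [LinearMap.smul_apply, opDP_pUnit, opP_pUnit, map_smul, spForm_pUnit_left,
      smul_eq_mul, pUnit_apply]
    by_cases h : addB n Λ = Ω
    · subst h
      rw [if_pos rfl, if_pos (eraseB_addB hn Λ), addB_s hn, Multiset.count_cons_self,
        weight_addB hn]
      field_simp [βp_ne_zero]
      push_cast
      ring
    · have h' : Ω.s.count n = 0 ∨ eraseB n Ω ≠ Λ := by
        by_cases hm : n ∈ Ω.s
        · exact Or.inr fun he => h (he ▸ addB_eraseB hm)
        · exact Or.inl (Multiset.count_eq_zero.2 hm)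
      rcases h' with h' | h' <;> simp [h', Ne.symm h]

lemma isAdjointPair_opPt (k : ℕ) :
    IsAdjointPair spForm spForm (opPt k) ((-βp⁻¹) • (opDPt k ∘ₗ parity) : Module.End F PS) :=
  isAdjointPair_of_pUnit fun Λ Ω => by
    rw [LinearMap.smul_apply, LinearMap.comp_apply, parity_pUnit, map_smul, map_smul,
      opPt_pUnit, opDPt_pUnit]
    by_cases h : k ∉ Λ.a ∧ addF k Λ = Ω
    · obtain ⟨hk, rfl⟩ := h
      have hmem : k ∈ (addF k Λ).a := Finset.mem_insert_self k Λ.a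
      simp only [hk, hmem, if_false, if_true, map_smul, LinearMap.smul_apply, spForm_pUnit_left,
        pUnit_apply, eraseF_addF hk, fsgn_addF, fdeg_addF hk, weight_addF hk,
        smul_eq_mul]
      field_simp [βp_ne_zero]
      ring
    · have h' : k ∉ Ω.a ∨ eraseF k Ω ≠ Λ := by
        by_contra! h'
        obtain ⟨hk, rfl⟩ := h'
        exact h ⟨Finset.notMem_erase k Ω.a, addF_eraseF hk⟩
      split_ifs with hΛ hΩ hΩ <;>
        simp_all [spForm_pUnit_left, pUnit_apply, eq_comm]

lemma spForm_opP_left (hn : 0 < n) (f g : PS) :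
    spForm (opP n f) g = n / βp * spForm f (opDP n g) := by
  rw [isAdjointPair_opP hn f g, LinearMap.smul_apply, map_smul, smul_eq_mul]

lemma spForm_opDP_left (hn : 0 < n) (f g : PS) :
    spForm (opDP n f) g = βp / n * spForm f (opP n g) := by
  have hn' : (n : F) ≠ 0 := Nat.cast_ne_zero.2 hn.ne'
  rw [spForm_comm (opDP n f), spForm_comm f, spForm_opP_left hn]
  field_simp [βp_ne_zero]

lemma spForm_opPt_left (k : ℕ) (f g : PS) :
    spForm (opPt k f) g = -βp⁻¹ * spForm f (opDPt k (parity g)) := by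
  rw [isAdjointPair_opPt k f g, LinearMap.smul_apply, map_smul, smul_eq_mul,
    LinearMap.comp_apply]

lemma spForm_opDPt_left (k : ℕ) (f g : PS) :
    spForm (opDPt k f) g = βp * spForm f (opPt k (parity g)) := by
  rw [spForm_comm f, spForm_opPt_left, isSelfAdjoint_parity, parity_opDPt, parity_parity,
    map_neg, spForm_comm g]
  field_simp [βp_ne_zero]

end Adjoints

section Terms

variable {m n : ℕ}

def diagH (Ncst : F) (n : ℕ) : Module.End F PS :=
  ((n : F) ^ 2 + βp * (n : F) * (Ncst - (n : F))) • (opP n ∘ₗ opDP n + opPt n ∘ₗ opDPt n)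

def splitH (m n : ℕ) : Module.End F PS :=
  ((m + n : ℕ) : F) • (opP m ∘ₗ opP n ∘ₗ opDP (m + n))
    + (2 * (m : F)) • (opP n ∘ₗ opPt m ∘ₗ opDPt (n + m))

def joinH (m n : ℕ) : Module.End F PS :=
  ((m : F) * (n : F)) •
    (opP (m + n) ∘ₗ opDP n ∘ₗ opDP m + (2 : F) • (opPt (n + m) ∘ₗ opDPt m ∘ₗ opDP n))

def diagI (n : ℕ) : Module.End F PS := ((1 - βp) * (n : F)) • (opPt n ∘ₗ opDPt n)

def fermI (m n : ℕ) : Module.End F PS := opPt m ∘ₗ opPt n ∘ₗ opDPt m ∘ₗ opDPt n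

def mixI (m n : ℕ) : Module.End F PS :=
  (n : F) • (opPt (m + n) ∘ₗ opDPt m ∘ₗ opDP n) + βp • (opP n ∘ₗ opPt m ∘ₗ opDPt (m + n))

/- In the proofs below, `simp` with the `spForm_*_left` lemmas moves every operator into the right
argument, so both sides become multiples of the same pairings `spForm f (w g)`. -/

lemma isSelfAdjoint_diagH (Ncst : F) (hn : 0 < n) : spForm.IsSelfAdjoint (diagH Ncst n) :=
  fun f g => by
    have hn' : (n : F) ≠ 0 := Nat.cast_ne_zero.2 hn.ne'
    simp only [diagH, LinearMap.smul_apply, LinearMap.add_apply, LinearMap.comp_apply, map_add,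
      map_smul, smul_eq_mul, spForm_opP_left hn, spForm_opDP_left hn, spForm_opPt_left,
      spForm_opDPt_left, parity_opDPt, parity_parity, map_neg]
    field_simp [βp_ne_zero]

lemma isAdjointPair_splitH_joinH (hm : 0 < m) (hn : 0 < n) :
    IsAdjointPair spForm spForm (βp • splitH m n : Module.End F PS) (joinH m n) := fun f g => by
  have hmn : 0 < m + n := by omega
  have hm' : (m : F) ≠ 0 := Nat.cast_ne_zero.2 hm.ne'
  have hn' : (n : F) ≠ 0 := Nat.cast_ne_zero.2 hn.ne'
  have hmn' : (m : F) + n ≠ 0 := by exact_mod_cast hmn.ne'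
  simp only [splitH, joinH, LinearMap.smul_apply, LinearMap.add_apply, LinearMap.comp_apply,
    map_add, map_smul, smul_eq_mul, spForm_opP_left hm, spForm_opP_left hn,
    spForm_opDP_left hmn, spForm_opPt_left, spForm_opDPt_left, parity_opDPt, parity_parity,
    map_neg, Nat.add_comm n m]
  push_cast
  field_simp [βp_ne_zero]

lemma isSelfAdjoint_diagI (n : ℕ) : spForm.IsSelfAdjoint (diagI n) := fun f g => by
  simp only [diagI, LinearMap.smul_apply, LinearMap.comp_apply, map_smul, smul_eq_mul,
    spForm_opPt_left, spForm_opDPt_left, parity_opDPt, parity_parity, map_neg]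
  field_simp [βp_ne_zero]

lemma isAdjointPair_fermI (m n : ℕ) :
    IsAdjointPair spForm spForm (fermI m n) (fermI n m) := fun f g => by
  simp only [fermI, LinearMap.comp_apply, spForm_opPt_left, spForm_opDPt_left, parity_opDPt,
    parity_opPt, parity_parity, map_neg]
  field_simp [βp_ne_zero]

lemma isSelfAdjoint_mixI (m : ℕ) (hn : 0 < n) : spForm.IsSelfAdjoint (mixI m n) := fun f g => by
  have hn' : (n : F) ≠ 0 := Nat.cast_ne_zero.2 hn.ne'
  simp only [mixI, LinearMap.smul_apply, LinearMap.add_apply, LinearMap.comp_apply, map_add,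
    map_smul, smul_eq_mul, spForm_opP_left hn, spForm_opDP_left hn, spForm_opPt_left,
    spForm_opDPt_left, parity_opDPt, parity_parity, map_neg]
  field_simp [βp_ne_zero]
  ring

end Terms

section Truncation

def degLE (M : ℕ) : Submodule F PS := Finsupp.supported F F {Λ | Λ.bdeg ≤ M}

variable {M m n k : ℕ} {f : PS}

lemma pUnit_mem_degLE (Λ : SuperPartition) : pUnit Λ ∈ degLE Λ.bdeg :=
  Finsupp.single_mem_supported F 1 (show Λ.bdeg ≤ Λ.bdeg from le_rfl)

lemma liftP_mem {s : Set SuperPartition} {p : Submodule F PS} {g : SuperPartition → PS}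
    (hg : ∀ Λ ∈ s, g Λ ∈ p) (hf : f ∈ Finsupp.supported F F s) : liftP g f ∈ p := by
  rw [liftP, Finsupp.linearCombination_apply]
  exact Submodule.finsuppSum_mem F p f _ fun Λ hΛ =>
    p.smul_mem _ (hg Λ (hf (Finsupp.mem_support_iff.2 hΛ)))

lemma opDP_mem_degLE (n : ℕ) (hf : f ∈ degLE M) : opDP n f ∈ degLE M :=
  liftP_mem (fun Λ hΛ => Submodule.smul_mem _ _
    (Finsupp.single_mem_supported F 1 ((bdeg_eraseB_le n Λ).trans hΛ))) hf

lemma opDPt_mem_degLE (k : ℕ) (hf : f ∈ degLE M) : opDPt k f ∈ degLE M :=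
  liftP_mem (fun Λ hΛ => by
    split_ifs
    · exact Submodule.smul_mem _ _
        (Finsupp.single_mem_supported F 1 ((bdeg_eraseF_le k Λ).trans hΛ))
    · exact zero_mem _) hf

lemma opDP_eq_zero_of_lt (h : M < n) (hf : f ∈ degLE M) : opDP n f = 0 :=
  (Submodule.mem_bot F).1 <| liftP_mem (fun Λ hΛ => by
    rw [count_s_eq_zero_of_bdeg_lt (lt_of_le_of_lt hΛ h), Nat.cast_zero, zero_smul]
    exact zero_mem _) hf

lemma opDPt_eq_zero_of_lt (h : M < k) (hf : f ∈ degLE M) : opDPt k f = 0 :=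
  (Submodule.mem_bot F).1 <| liftP_mem (fun Λ hΛ => by
    rw [if_neg (notMem_a_of_bdeg_lt (lt_of_le_of_lt hΛ h))]
    exact zero_mem _) hf

lemma diagH_apply_eq_zero (Ncst : F) (h : M < n) (hf : f ∈ degLE M) : diagH Ncst n f = 0 := by
  simp [diagH, opDP_eq_zero_of_lt h hf, opDPt_eq_zero_of_lt h hf]

lemma splitH_apply_eq_zero (h : M < m ∨ M < n) (hf : f ∈ degLE M) : splitH m n f = 0 := by
  simp [splitH, opDP_eq_zero_of_lt (by omega : M < m + n) hf,
    opDPt_eq_zero_of_lt (by omega : M < n + m) hf]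

lemma joinH_apply_eq_zero (h : M < m ∨ M < n) (hf : f ∈ degLE M) : joinH m n f = 0 := by
  rcases h with h | h
  · simp [joinH, opDP_eq_zero_of_lt h hf, opDPt_eq_zero_of_lt h (opDP_mem_degLE n hf)]
  · simp [joinH, opDP_eq_zero_of_lt h hf, opDP_eq_zero_of_lt h (opDP_mem_degLE m hf)]

lemma diagI_apply_eq_zero (h : M < n) (hf : f ∈ degLE M) : diagI n f = 0 := by
  simp [diagI, opDPt_eq_zero_of_lt h hf]

lemma fermI_apply_eq_zero (h : M < m ∨ M < n) (hf : f ∈ degLE M) : fermI m n f = 0 := by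
  rcases h with h | h
  · simp [fermI, opDPt_eq_zero_of_lt h (opDPt_mem_degLE n hf)]
  · simp [fermI, opDPt_eq_zero_of_lt h hf]

lemma mixI_apply_eq_zero (h : M < m ∨ M < n) (hf : f ∈ degLE M) : mixI m n f = 0 := by
  rcases h with h | h
  · simp [mixI, opDPt_eq_zero_of_lt h (opDP_mem_degLE n hf),
      opDPt_eq_zero_of_lt (by omega : M < m + n) hf]
  · simp [mixI, opDP_eq_zero_of_lt h hf, opDPt_eq_zero_of_lt (by omega : M < m + n) hf]

def truncH (Ncst : F) (M : ℕ) : Module.End F PS :=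
  ∑ n ∈ Finset.Icc 1 M, diagH Ncst n
    + βp • ∑ m ∈ Finset.Icc 1 M, ∑ n ∈ Finset.Icc 1 M, splitH m n
    + ∑ m ∈ Finset.Icc 1 M, ∑ n ∈ Finset.Icc 1 M, joinH m n

def truncI (M : ℕ) : Module.End F PS :=
  ∑ n ∈ Finset.range (M + 1), diagI n
    + (βp / 2) • ∑ m ∈ Finset.range (M + 1), ∑ n ∈ Finset.range (M + 1), fermI m n
    + ∑ m ∈ Finset.range (M + 1), ∑ n ∈ Finset.Icc 1 M, mixI m n

lemma isSelfAdjoint_truncH (Ncst : F) (M : ℕ) : spForm.IsSelfAdjoint (truncH Ncst M) := by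
  have hdiag := isAdjointPair_sum (B := spForm) (Finset.Icc 1 M) fun n hn =>
    isSelfAdjoint_diagH Ncst (Finset.mem_Icc.1 hn).1
  have hsplit : IsAdjointPair spForm spForm
      (βp • ∑ m ∈ Finset.Icc 1 M, ∑ n ∈ Finset.Icc 1 M, splitH m n : Module.End F PS)
      (∑ m ∈ Finset.Icc 1 M, ∑ n ∈ Finset.Icc 1 M, joinH m n : Module.End F PS) := by
    simp only [Finset.smul_sum]
    exact isAdjointPair_sum _ fun m hm => isAdjointPair_sum _ fun n hn =>
      isAdjointPair_splitH_joinH (m := m) (n := n) (Finset.mem_Icc.1 hm).1 (Finset.mem_Icc.1 hn).1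
  rw [truncH, add_assoc]
  exact hdiag.add (hsplit.isSelfAdjoint_add spForm_isSymm)

lemma isSelfAdjoint_truncI (M : ℕ) : spForm.IsSelfAdjoint (truncI M) := by
  have hdiag := isAdjointPair_sum (B := spForm) (Finset.range (M + 1)) fun n _ =>
    isSelfAdjoint_diagI n
  have hferm := isAdjointPair_sum (B := spForm) (Finset.range (M + 1)) fun m _ =>
    isAdjointPair_sum (Finset.range (M + 1)) fun n _ => isAdjointPair_fermI m n
  rw [Finset.sum_comm (f := fun m n => fermI n m)] at hferm
  have hmix := isAdjointPair_sum (B := spForm) (Finset.range (M + 1)) fun m _ =>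
    isAdjointPair_sum (Finset.Icc 1 M) fun n hn => isSelfAdjoint_mixI m (Finset.mem_Icc.1 hn).1
  rw [truncI]
  exact (hdiag.add (hferm.smul _)).add hmix

lemma truncH_apply_eq (Ncst : F) {M' : ℕ} (hM : M ≤ M') (hf : f ∈ degLE M) :
    truncH Ncst M' f = truncH Ncst M f := by
  have hsub : Finset.Icc 1 M ⊆ Finset.Icc 1 M' := Finset.Icc_subset_Icc_right hM
  have hlt : ∀ i ∈ Finset.Icc 1 M', i ∉ Finset.Icc 1 M → M < i := fun i hi hi' => by
    simp only [Finset.mem_Icc] at hi hi'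
    omega
  simp only [truncH, LinearMap.add_apply, LinearMap.smul_apply, LinearMap.sum_apply]
  rw [Finset.sum_subset hsub fun n hn hn' => diagH_apply_eq_zero Ncst (hlt n hn hn') hf,
    Finset.sum_sum_subset hsub hsub fun m hm n hn h =>
      splitH_apply_eq_zero (h.imp (hlt m hm) (hlt n hn)) hf,
    Finset.sum_sum_subset hsub hsub fun m hm n hn h =>
      joinH_apply_eq_zero (h.imp (hlt m hm) (hlt n hn)) hf]

lemma truncI_apply_eq {M' : ℕ} (hM : M ≤ M') (hf : f ∈ degLE M) :
    truncI M' f = truncI M f := by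
  have hsub₀ : Finset.range (M + 1) ⊆ Finset.range (M' + 1) :=
    Finset.range_subset_range.2 (by omega)
  have hsub : Finset.Icc 1 M ⊆ Finset.Icc 1 M' := Finset.Icc_subset_Icc_right hM
  have hlt₀ : ∀ i ∈ Finset.range (M' + 1), i ∉ Finset.range (M + 1) → M < i :=
    fun i _ hi' => by
      rw [Finset.mem_range] at hi'
      omega
  have hlt : ∀ i ∈ Finset.Icc 1 M', i ∉ Finset.Icc 1 M → M < i := fun i hi hi' => by
    simp only [Finset.mem_Icc] at hi hi'
    omega
  simp only [truncI, LinearMap.add_apply, LinearMap.smul_apply, LinearMap.sum_apply]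
  rw [Finset.sum_subset hsub₀ fun n hn hn' => diagI_apply_eq_zero (hlt₀ n hn hn') hf,
    Finset.sum_sum_subset hsub₀ hsub₀ fun m hm n hn h =>
      fermI_apply_eq_zero (h.imp (hlt₀ m hm) (hlt₀ n hn)) hf,
    Finset.sum_sum_subset hsub₀ hsub fun m hm n hn h =>
      mixI_apply_eq_zero (h.imp (hlt₀ m hm) (hlt n hn)) hf]

lemma Hop9_pUnit (Ncst : F) {Λ : SuperPartition} (hΛ : Λ.bdeg ≤ M) :
    Hop9 Ncst (pUnit Λ) = truncH Ncst M (pUnit Λ) := by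
  rw [truncH_apply_eq Ncst hΛ (pUnit_mem_degLE Λ)]
  simp only [Hop9, liftP_pUnit, truncH, diagH, splitH, joinH, LinearMap.add_apply,
    LinearMap.smul_apply, LinearMap.sum_apply, LinearMap.comp_apply]

lemma Iop9_pUnit {Λ : SuperPartition} (hΛ : Λ.bdeg ≤ M) :
    Iop9 (pUnit Λ) = truncI M (pUnit Λ) := by
  rw [truncI_apply_eq hΛ (pUnit_mem_degLE Λ)]
  simp only [Iop9, liftP_pUnit, truncI, diagI, fermI, mixI, LinearMap.add_apply,
    LinearMap.smul_apply, LinearMap.sum_apply, LinearMap.comp_apply]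

end Truncation

lemma isSelfAdjoint_of_pUnit_eq_trunc {T : Module.End F PS} {trunc : ℕ → Module.End F PS}
    (htrunc : ∀ M, spForm.IsSelfAdjoint (trunc M))
    (hT : ∀ (Λ : SuperPartition) M, Λ.bdeg ≤ M → T (pUnit Λ) = trunc M (pUnit Λ)) :
    spForm.IsSelfAdjoint T :=
  isAdjointPair_of_pUnit fun Λ Ω => by
    rw [hT Λ _ (le_max_left Λ.bdeg Ω.bdeg), hT Ω _ (le_max_right Λ.bdeg Ω.bdeg)]
    exact htrunc _ _ _

theorem statement9 (Ncst : F) :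
    (∀ f g : PS, spF (Hop9 Ncst f) g = spF f (Hop9 Ncst g)) ∧
    (∀ f g : PS, spF (Iop9 f) g = spF f (Iop9 g)) :=
  ⟨isSelfAdjoint_of_pUnit_eq_trunc (isSelfAdjoint_truncH Ncst) fun _ _ => Hop9_pUnit Ncst,
    isSelfAdjoint_of_pUnit_eq_trunc isSelfAdjoint_truncI fun _ _ => Iop9_pUnit⟩
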